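/- arXiv:2412.20140 — 3 statements merged into one kernel-verified Lean document; each statement's English description precedes it below -/
import Mathlib

section
/- With the generic setup over F₂(a₁₁,...,a₄₄), the sixteen vectors e_i^{(j)} (i,j = 1,...,4) are linearly independent in F³²; in particular, the subspace W they span has dimension 16. -/
open Matrix MvPolynomial

abbrev Edge := Fin 4 × (Fin 3 → Fin 2)
abbrev Vtx := Fin 4 → Fin 2

/-- Lexicographic position of a 3-bit edge label. -/
def toFin8 (s : Fin 3 → Fin 2) : Fin 8 :=
  ⟨4 * (s 0).val + 2 * (s 1).val + (s 2).val, by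
    have := (s 0).isLt; have := (s 1).isLt; have := (s 2).isLt; omega⟩

/-- The edge through vertex `c` parallel to axis `i`, labeled by the
remaining three coordinates of `c`. -/
def edgeAt (c : Vtx) (i : Fin 4) : Edge := (i, fun l => c (i.succAbove l))

/-- The 32×32 matrix that is the identity except for the 4×4 submatrix on the
four edges through vertex `c`, where it equals `A`. -/
def bigA {R : Type*} [CommRing R] (A : Matrix (Fin 4) (Fin 4) R) (c : Vtx) :
    Matrix Edge Edge R := fun e f =>
  if (fun l => c (e.1.succAbove l)) = e.2 then
    (if (fun l => c (f.1.succAbove l)) = f.2 then A e.1 f.1 else 0)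
  else if e = f then 1 else 0

/-- The `m`-th vertex of `{0,1}⁴` in lexicographic order. -/
def vertexOfFin (m : Fin 16) : Vtx :=
  fun i => ⟨m.val / 2 ^ (3 - i.val) % 2, Nat.mod_lt _ (by norm_num)⟩

/-- All sixteen vertices, ordered by increasing coordinate sum. -/
def vertexList : List Vtx :=
  ((List.finRange 16).map vertexOfFin).mergeSort
    (fun c c' => decide ((∑ i, (c i).val) ≤ ∑ i, (c' i).val))

/-- The block `B`: product of the sixteen `bigA` matrices, starting with
vertex `(0,0,0,0)`. -/
def blockB {R : Type*} [CommRing R] (A : Matrix (Fin 4) (Fin 4) R) :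
    Matrix Edge Edge R :=
  (vertexList.map (bigA A)).prod

/-- The thick matrix entry `b_{jk}` of the block. -/
def thick {R : Type*} [CommRing R] (A : Matrix (Fin 4) (Fin 4) R) (j k : Fin 4) :
    Matrix (Fin 3 → Fin 2) (Fin 3 → Fin 2) R :=
  fun s t => blockB A (j, s) (k, t)

/-- Embedding of an 8-row of the thick space `V_j` into `F³²`. -/
def embedV {R : Type*} [CommRing R] (j : Fin 4) (x : Fin 8 → R) : Edge → R :=
  fun e => if e.1 = j then x (toFin8 e.2) else 0

/-- The representing polynomial of an 8-row of `V_j`, written in the three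
variables `u_l`, `l ≠ j`. -/
noncomputable def repAt {R : Type*} [CommRing R] (j : Fin 4) (x : Fin 8 → R) :
    MvPolynomial (Fin 4) R :=
  ∑ s : Fin 3 → Fin 2, MvPolynomial.C (x (toFin8 s)) *
    ∏ l, if s l = 0 then MvPolynomial.X (j.succAbove l) else 1

/-- The (unsigned) `(i,j)` cofactor: determinant with row `i` and column `j`
deleted. -/
def cof {R : Type*} [CommRing R] (M : Matrix (Fin 4) (Fin 4) R) (i j : Fin 4) : R :=
  (M.submatrix i.succAbove j.succAbove).det

/-- The matrix `C = A + diag(u₁,u₂,u₃,u₄)`. -/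
noncomputable def Cmat {R : Type*} [CommRing R] (A : Matrix (Fin 4) (Fin 4) R) :
    Matrix (Fin 4) (Fin 4) (MvPolynomial (Fin 4) R) :=
  A.map MvPolynomial.C + Matrix.diagonal (fun i => MvPolynomial.X i)

abbrev Fgen := FractionRing (MvPolynomial (Fin 4 × Fin 4) (ZMod 2))

noncomputable def Agen : Matrix (Fin 4) (Fin 4) Fgen :=
  fun p q => algebraMap (MvPolynomial (Fin 4 × Fin 4) (ZMod 2)) Fgen
    (MvPolynomial.X (p, q))



set_option maxHeartbeats 2000000
set_option synthInstance.maxHeartbeats 400000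

lemma detKey {F : Type*} [Field F] (a : Matrix (Fin 4) (Fin 4) F) (c : Fin 4 → F) (j : Fin 4)
    (ha : ∀ p q, a p q ≠ 0)
    (H : ∀ u : Fin 4 → F, ∑ i, c i * (Matrix.submatrix
        (Matrix.of fun p q => a p q + if p = q then u p else 0)
        i.succAbove j.succAbove).det = 0) :
    ∀ i, c i = 0 := by
  have s0 : (Fin.succAbove (0:Fin 4)) = ![1,2,3] := by decide
  have s1 : (Fin.succAbove (1:Fin 4)) = ![0,2,3] := by decide
  have s2 : (Fin.succAbove (2:Fin 4)) = ![0,1,3] := by decide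
  have s3 : (Fin.succAbove (3:Fin 4)) = ![0,1,2] := by decide
  have hj : j = 0 ∨ j = 1 ∨ j = 2 ∨ j = 3 := by fin_cases j <;> simp
  rcases hj with rfl | rfl | rfl | rfl
  · -- j = 0
    have h123 := H ![0,1,1,1]
    have h12 := H ![0,1,1,0]
    have h13 := H ![0,1,0,1]
    have h23 := H ![0,0,1,1]
    have h1 := H ![0,1,0,0]
    have h2 := H ![0,0,1,0]
    have h3 := H ![0,0,0,1]
    have h_ := H ![0,0,0,0]
    simp only [Fin.sum_univ_four, s0, s1, s2, s3, det_fin_three, submatrix_apply, of_apply,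
      Matrix.cons_val_zero, Matrix.cons_val_one, Matrix.head_cons, Matrix.cons_val_two,
      Matrix.cons_val_three, Matrix.tail_cons, Fin.reduceEq, reduceIte] at h123 h12 h13 h23 h1 h2 h3 h_
    have hc0 : c 0 = 0 := by linear_combination h123 - h12 - h13 - h23 + h1 + h2 + h3 - h_
    have hm1 : c 1 * a 0 1 = 0 := by
      linear_combination h23 - h2 - h3 + h_ - a 1 1 * hc0
    have hc1 : c 1 = 0 := by
      rcases mul_eq_zero.mp hm1 with h | h
      · exact h
      · exact absurd h (ha 0 1)
    have hm2 : c 2 * a 0 2 = 0 := by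
      linear_combination -h13 + h1 + h3 - h_ + a 2 2 * hc0
    have hc2 : c 2 = 0 := by
      rcases mul_eq_zero.mp hm2 with h | h
      · exact h
      · exact absurd h (ha 0 2)
    have hm3 : c 3 * a 0 3 = 0 := by
      linear_combination h12 - h1 - h2 + h_ - a 3 3 * hc0
    have hc3 : c 3 = 0 := by
      rcases mul_eq_zero.mp hm3 with h | h
      · exact h
      · exact absurd h (ha 0 3)
    intro i; fin_cases i <;> assumption
  · -- j = 1
    have h023 := H ![1,0,1,1]
    have h02 := H ![1,0,1,0]
    have h03 := H ![1,0,0,1]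
    have h23 := H ![0,0,1,1]
    have h0 := H ![1,0,0,0]
    have h2 := H ![0,0,1,0]
    have h3 := H ![0,0,0,1]
    have h_ := H ![0,0,0,0]
    simp only [Fin.sum_univ_four, s0, s1, s2, s3, det_fin_three, submatrix_apply, of_apply,
      Matrix.cons_val_zero, Matrix.cons_val_one, Matrix.head_cons, Matrix.cons_val_two,
      Matrix.cons_val_three, Matrix.tail_cons, Fin.reduceEq, reduceIte] at h023 h02 h03 h23 h0 h2 h3 h_
    have hc1 : c 1 = 0 := by linear_combination h023 - h02 - h03 - h23 + h0 + h2 + h3 - h_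
    have hm0 : c 0 * a 1 0 = 0 := by
      linear_combination h23 - h2 - h3 + h_ - a 0 0 * hc1
    have hc0 : c 0 = 0 := by
      rcases mul_eq_zero.mp hm0 with h | h
      · exact h
      · exact absurd h (ha 1 0)
    have hm2 : c 2 * a 1 2 = 0 := by
      linear_combination h03 - h0 - h3 + h_ - a 2 2 * hc1
    have hc2 : c 2 = 0 := by
      rcases mul_eq_zero.mp hm2 with h | h
      · exact h
      · exact absurd h (ha 1 2)
    have hm3 : c 3 * a 1 3 = 0 := by
      linear_combination -h02 + h0 + h2 - h_ + a 3 3 * hc1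
    have hc3 : c 3 = 0 := by
      rcases mul_eq_zero.mp hm3 with h | h
      · exact h
      · exact absurd h (ha 1 3)
    intro i; fin_cases i <;> assumption
  · -- j = 2
    have h013 := H ![1,1,0,1]
    have h01 := H ![1,1,0,0]
    have h03 := H ![1,0,0,1]
    have h13 := H ![0,1,0,1]
    have h0 := H ![1,0,0,0]
    have h1 := H ![0,1,0,0]
    have h3 := H ![0,0,0,1]
    have h_ := H ![0,0,0,0]
    simp only [Fin.sum_univ_four, s0, s1, s2, s3, det_fin_three, submatrix_apply, of_apply,
      Matrix.cons_val_zero, Matrix.cons_val_one, Matrix.head_cons, Matrix.cons_val_two,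
      Matrix.cons_val_three, Matrix.tail_cons, Fin.reduceEq, reduceIte] at h013 h01 h03 h13 h0 h1 h3 h_
    have hc2 : c 2 = 0 := by linear_combination h013 - h01 - h03 - h13 + h0 + h1 + h3 - h_
    have hm0 : c 0 * a 2 0 = 0 := by
      linear_combination -h13 + h1 + h3 - h_ + a 0 0 * hc2
    have hc0 : c 0 = 0 := by
      rcases mul_eq_zero.mp hm0 with h | h
      · exact h
      · exact absurd h (ha 2 0)
    have hm1 : c 1 * a 2 1 = 0 := by
      linear_combination h03 - h0 - h3 + h_ - a 1 1 * hc2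
    have hc1 : c 1 = 0 := by
      rcases mul_eq_zero.mp hm1 with h | h
      · exact h
      · exact absurd h (ha 2 1)
    have hm3 : c 3 * a 2 3 = 0 := by
      linear_combination h01 - h0 - h1 + h_ - a 3 3 * hc2
    have hc3 : c 3 = 0 := by
      rcases mul_eq_zero.mp hm3 with h | h
      · exact h
      · exact absurd h (ha 2 3)
    intro i; fin_cases i <;> assumption
  · -- j = 3
    have h012 := H ![1,1,1,0]
    have h01 := H ![1,1,0,0]
    have h02 := H ![1,0,1,0]
    have h12 := H ![0,1,1,0]
    have h0 := H ![1,0,0,0]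
    have h1 := H ![0,1,0,0]
    have h2 := H ![0,0,1,0]
    have h_ := H ![0,0,0,0]
    simp only [Fin.sum_univ_four, s0, s1, s2, s3, det_fin_three, submatrix_apply, of_apply,
      Matrix.cons_val_zero, Matrix.cons_val_one, Matrix.head_cons, Matrix.cons_val_two,
      Matrix.cons_val_three, Matrix.tail_cons, Fin.reduceEq, reduceIte] at h012 h01 h02 h12 h0 h1 h2 h_
    have hc3 : c 3 = 0 := by linear_combination h012 - h01 - h02 - h12 + h0 + h1 + h2 - h_
    have hm0 : c 0 * a 3 0 = 0 := by
      linear_combination h12 - h1 - h2 + h_ - a 0 0 * hc3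
    have hc0 : c 0 = 0 := by
      rcases mul_eq_zero.mp hm0 with h | h
      · exact h
      · exact absurd h (ha 3 0)
    have hm1 : c 1 * a 3 1 = 0 := by
      linear_combination -h02 + h0 + h2 - h_ + a 1 1 * hc3
    have hc1 : c 1 = 0 := by
      rcases mul_eq_zero.mp hm1 with h | h
      · exact h
      · exact absurd h (ha 3 1)
    have hm2 : c 2 * a 3 2 = 0 := by
      linear_combination h01 - h0 - h1 + h_ - a 2 2 * hc3
    have hc2 : c 2 = 0 := by
      rcases mul_eq_zero.mp hm2 with h | h
      · exact h
      · exact absurd h (ha 3 2)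
    intro i; fin_cases i <;> assumption

lemma repAt_lin (j : Fin 4) (c : Fin 4 → Fgen) (x : Fin 4 → Fin 8 → Fgen) :
    repAt j (fun t => ∑ i, c i * x i t) = ∑ i, MvPolynomial.C (c i) * repAt j (x i) := by
  simp only [repAt, map_sum, _root_.map_mul, Finset.sum_mul, Finset.mul_sum]
  rw [Finset.sum_comm]
  exact Finset.sum_congr rfl fun i _ => Finset.sum_congr rfl fun s _ => by ring

lemma evalCof (u : Fin 4 → Fgen) (i j : Fin 4) :
    MvPolynomial.eval u (cof (Cmat Agen) i j) =
      (Matrix.submatrix (Matrix.of fun p q => Agen p q + if p = q then u p else 0)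
        i.succAbove j.succAbove).det := by
  rw [cof, RingHom.map_det]
  congr 1
  ext p q
  simp [Cmat, Matrix.submatrix, Matrix.map_apply, Matrix.diagonal, apply_ite]
  split <;> simp_all

lemma Agen_ne_zero (p q : Fin 4) : Agen p q ≠ 0 := by
  have hinj := IsFractionRing.injective (MvPolynomial (Fin 4 × Fin 4) (ZMod 2)) Fgen
  exact (map_ne_zero_iff _ hinj).mpr (MvPolynomial.X_ne_zero (R := ZMod 2) (p, q))

theorem cofactor_aux :
    ∀ e : Fin 4 → Fin 4 → Fin 8 → Fgen,
      (∀ i j, repAt j (e i j) = cof (Cmat Agen) i j) →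
      LinearIndependent Fgen
        (fun p : Fin 4 × Fin 4 => embedV p.2 (e p.1 p.2)) ∧
      Module.finrank Fgen
        (Submodule.span Fgen
          (Set.range fun p : Fin 4 × Fin 4 => embedV p.2 (e p.1 p.2))) = 16 := by
  intro e he
  have hli : LinearIndependent Fgen (fun p : Fin 4 × Fin 4 => embedV p.2 (e p.1 p.2)) := by
    rw [Fintype.linearIndependent_iff]
    intro g hg p
    have h2 : ∀ (j : Fin 4) (s : Fin 3 → Fin 2),
        ∑ i, g (i, j) * e i j (toFin8 s) = 0 := by
      intro j s
      have h3 := congrFun hg (j, s)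
      simp only [Finset.sum_apply, Pi.smul_apply, Pi.zero_apply, smul_eq_mul, embedV,
        Fintype.sum_prod_type] at h3
      simpa using h3
    have hvec : ∀ j : Fin 4, (fun t => ∑ i, g (i, j) * e i j t) = (fun _ => (0 : Fgen)) := by
      intro j
      funext t
      obtain ⟨s, rfl⟩ : ∃ s, toFin8 s = t := by
        revert t; decide
      exact h2 j s
    have hpol : ∀ j : Fin 4,
        ∑ i, MvPolynomial.C (g (i, j)) * cof (Cmat Agen) i j = 0 := by
      intro j
      calc ∑ i, MvPolynomial.C (g (i, j)) * cof (Cmat Agen) i j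
          = ∑ i, MvPolynomial.C (g (i, j)) * repAt j (e i j) := by
            simp_rw [he]
        _ = repAt j (fun t => ∑ i, g (i, j) * e i j t) := (repAt_lin j _ _).symm
        _ = repAt j (fun _ => 0) := by rw [hvec j]
        _ = 0 := by simp [repAt]
    have key : ∀ j i : Fin 4, g (i, j) = 0 := by
      intro j
      refine detKey Agen (fun i => g (i, j)) j Agen_ne_zero ?_
      intro u
      have h4 := congrArg (MvPolynomial.eval u) (hpol j)
      simpa [map_sum, evalCof] using h4
    exact key p.2 p.1
  refine ⟨hli, ?_⟩
  rw [finrank_span_eq_card hli]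
  simp

/-- The sixteen embedded cofactor vectors `e_i^{(j)}` are linearly independent
in `F³²`; in particular their span `W` has dimension 16. -/
theorem cofactor_vectors_linearIndependent :
    ∀ e : Fin 4 → Fin 4 → Fin 8 → Fgen,
      (∀ i j, repAt j (e i j) = cof (Cmat Agen) i j) →
      LinearIndependent Fgen
        (fun p : Fin 4 × Fin 4 => embedV p.2 (e p.1 p.2)) ∧
      Module.finrank Fgen
        (Submodule.span Fgen
          (Set.range fun p : Fin 4 × Fin 4 => embedV p.2 (e p.1 p.2))) = 16 :=
  cofactor_aux
end

section
/- The 32×32 matrix Bᵀ (the transpose of the block B built from sixteen copies of a 4×4 matrix A over a commutative ring) equals the block matrix built in the same way from Aᵀ, except that the order of vertices along each coordinate axis is reversed, i.e., every vertex coordinate is replaced via 0↦1, 1↦0. -/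
open Matrix MvPolynomial

/-- Coordinate flip `0 ↦ 1`, `1 ↦ 0` on `Fin 2`. -/
def flip2 (b : Fin 2) : Fin 2 := if b = 0 then 1 else 0

/-! Transposition reverses the product and turns each factor `bigA A c` into `bigA Aᵀ c`; on the
sixteen vertices sorted by coordinate sum, reversing the order is the same as flipping every
coordinate. -/

theorem bigA_transpose {R : Type*} [CommRing R] (A : Matrix (Fin 4) (Fin 4) R) (c : Vtx) :
    (bigA A c)ᵀ = bigA Aᵀ c := by
  ext e f
  simp only [transpose_apply, bigA]
  grind

theorem vertexList_eq : vertexList =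
    [![0,0,0,0], ![0,0,0,1], ![0,0,1,0], ![0,1,0,0], ![1,0,0,0], ![0,0,1,1], ![0,1,0,1], ![0,1,1,0],
     ![1,0,0,1], ![1,0,1,0], ![1,1,0,0], ![0,1,1,1], ![1,0,1,1], ![1,1,0,1], ![1,1,1,0], ![1,1,1,1]] := by
  have lex_order : (List.finRange 16).map vertexOfFin =
      [![0,0,0,0], ![0,0,0,1], ![0,0,1,0], ![0,0,1,1], ![0,1,0,0], ![0,1,0,1], ![0,1,1,0],
       ![0,1,1,1], ![1,0,0,0], ![1,0,0,1], ![1,0,1,0], ![1,0,1,1], ![1,1,0,0], ![1,1,0,1],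
       ![1,1,1,0], ![1,1,1,1]] := by
    decide
  rw [vertexList, lex_order]
  simp [List.mergeSort, List.MergeSort.Internal.splitInTwo, Fin.sum_univ_four]

theorem vertexList_reverse : vertexList.reverse = vertexList.map (fun c i => flip2 (c i)) := by
  rw [vertexList_eq]
  decide

/-- The transpose of the block `B` built from sixteen copies of `A` equals the
block built in the same way from `Aᵀ` with every vertex coordinate flipped
(`0 ↦ 1`, `1 ↦ 0`). -/
theorem blockB_transpose (R : Type*) [CommRing R] (A : Matrix (Fin 4) (Fin 4) R) :
    (blockB A)ᵀ =
      (vertexList.map (fun c => bigA Aᵀ (fun i => flip2 (c i)))).prod := by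
  calc (blockB A)ᵀ = (vertexList.reverse.map (bigA Aᵀ)).prod := by
        simp [blockB, transpose_list_prod, Function.comp_def, bigA_transpose, List.map_reverse]
    _ = _ := by rw [vertexList_reverse, List.map_map]; rfl
end

section
/- Over F₂, with A the matrix with rows (1,1,1,1), (0,1,1,0), (0,0,1,1), (1,0,0,0), and with the entries of A being elements of F₂ (so that squaring is the identity), the specialization of the generic cofactor eigenrelation reads: e_i^{(j)} · b_{jk} = a_{jk} · e_i^{(k)} for all i,j,k, where e_i^{(j)} are the cofactor vectors of C = A + diag(u₁,...,u₄) specialized at the F₂ entries. Hence B acts on each of the four 4-dimensional subspaces span{e_i^{(1)},...,e_i^{(4)}} as A itself. -/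
open Matrix MvPolynomial

/-- The concrete matrix `A` of the paper's example. -/
def Aconc : Matrix (Fin 4) (Fin 4) (ZMod 2) :=
  !![1,1,1,1; 0,1,1,0; 0,0,1,1; 1,0,0,0]

/-- The matrix `A₁`. -/
def A1conc : Matrix (Fin 4) (Fin 4) (ZMod 2) :=
  !![1,0,1,1; 0,1,0,1; 0,1,1,1; 1,0,0,0]

/-!
Over `F₂` the statement is a finite computation. The monomials of `repAt j` are distinct, so
`repAt j` is injective and the hypothesis pins `e_i^{(j)}` down to the coefficient vector of the
cofactor, an explicit table. Multiplying a row vector by `bigA A c` only changes the four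
coordinates on the edges through `c`, so `e_i^{(j)} B` is a fold over the sixteen vertices, and
the row relation `e_i^{(j)} B = ∑ₖ a_{jk} e_i^{(k)}` is checked by evaluation in the kernel. Its
`(k, t)` coordinates are the thick relations `e_i^{(j)} b_{jk} = a_{jk} e_i^{(k)}`.
-/

section RowAction

variable {R : Type*} [CommRing R]

theorem vecMul_list_prod {n : Type*} [Fintype n] [DecidableEq n] (v : n → R)
    (L : List (Matrix n n R)) :
    v ᵥ* L.prod = L.foldl (· ᵥ* ·) v := by
  induction L generalizing v with
  | nil => simp
  | cons M L ih => rw [List.prod_cons, ← vecMul_vecMul, ih, List.foldl_cons]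

def bigARow (A : Matrix (Fin 4) (Fin 4) R) (v : Edge → R) (c : Vtx) : Edge → R :=
  fun f => if (fun l => c (f.1.succAbove l)) = f.2 then ∑ b, v (edgeAt c b) * A b f.1 else v f

theorem vecMul_bigA (A : Matrix (Fin 4) (Fin 4) R) (v : Edge → R) (c : Vtx) :
    v ᵥ* bigA A c = bigARow A v c := by
  ext f
  simp only [vecMul, dotProduct, bigARow]
  split_ifs with hf
  · have hterm (g : Edge) : v g * bigA A c g f =
        if (fun l => c (g.1.succAbove l)) = g.2 then v g * A g.1 f.1 else 0 := by
      unfold bigA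
      split_ifs <;> simp_all
    simp [hterm, Fintype.sum_prod_type, edgeAt]
  · rw [Fintype.sum_eq_single f]
    · simp [bigA, hf]
    · intro g hg
      unfold bigA
      split_ifs <;> simp_all

theorem vecMul_blockB (A : Matrix (Fin 4) (Fin 4) R) (v : Edge → R) :
    v ᵥ* blockB A = vertexList.foldl (bigARow A) v := by
  simp only [blockB, vecMul_list_prod, List.foldl_map, vecMul_bigA]

theorem vecMul_embedV_apply (j : Fin 4) (x : Fin 8 → R) (M : Matrix Edge Edge R) (k : Fin 4)
    (t : Fin 3 → Fin 2) :
    (embedV j x ᵥ* M) (k, t) = ∑ s, x (toFin8 s) * M (j, s) (k, t) := by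
  simp [vecMul, dotProduct, embedV, Fintype.sum_prod_type]

theorem sum_smul_embedV_apply (a : Fin 4 → R) (y : Fin 4 → Fin 8 → R) (k : Fin 4)
    (t : Fin 3 → Fin 2) :
    (∑ k', a k' • embedV k' (y k')) (k, t) = a k * y k (toFin8 t) := by
  simp [embedV]

end RowAction

section RepresentingPolynomial

variable {R : Type*} [CommRing R]

theorem toFin8_surjective : Function.Surjective toFin8 := by decide

noncomputable def repExponent (j : Fin 4) (s : Fin 3 → Fin 2) : Fin 4 →₀ ℕ :=
  ∑ l, Finsupp.single (j.succAbove l) (if s l = 0 then 1 else 0)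

theorem repExponent_apply_succAbove (j : Fin 4) (s : Fin 3 → Fin 2) (l : Fin 3) :
    repExponent j s (j.succAbove l) = if s l = 0 then 1 else 0 := by
  simp [repExponent, Finsupp.finsetSum_apply, Finsupp.single_apply]

theorem repExponent_injective (j : Fin 4) : Function.Injective (repExponent j) := by
  intro s t h
  funext l
  have hl := DFunLike.congr_fun h (j.succAbove l)
  rw [repExponent_apply_succAbove, repExponent_apply_succAbove] at hl
  revert hl
  generalize s l = a
  generalize t l = b
  revert a b
  decide

theorem prod_X_ite_eq_monomial (j : Fin 4) (s : Fin 3 → Fin 2) :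
    (∏ l, if s l = 0 then X (j.succAbove l) else 1 : MvPolynomial (Fin 4) R) =
      monomial (repExponent j s) 1 := by
  simp [repExponent, monomial_sum_one, ← X_pow_eq_monomial, pow_ite]

theorem coeff_repExponent_repAt (j : Fin 4) (x : Fin 8 → R) (s : Fin 3 → Fin 2) :
    coeff (repExponent j s) (repAt j x) = x (toFin8 s) := by
  simp [repAt, prod_X_ite_eq_monomial, coeff_sum, coeff_C_mul, coeff_monomial,
    (repExponent_injective j).eq_iff]

theorem repAt_injective (j : Fin 4) : Function.Injective (repAt (R := R) j) := by
  intro x y h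
  funext n
  obtain ⟨s, rfl⟩ := toFin8_surjective n
  rw [← coeff_repExponent_repAt j x, h, coeff_repExponent_repAt]

end RepresentingPolynomial

/-- `cofVec i j` is the coefficient vector of the cofactor `e_i^{(j)}` of `Cmat Aconc`. -/
def cofVec : Fin 4 → Fin 4 → Fin 8 → ZMod 2 := ![
  ![![1,0,1,0,1,0,1,0], ![0,0,0,0,0,0,0,1], ![0,0,0,0,0,1,0,1], ![0,0,0,0,1,1,1,1]],
  ![![0,0,0,0,1,0,1,0], ![1,0,1,0,1,1,1,0], ![0,0,0,0,0,0,0,1], ![0,0,0,0,0,0,1,1]],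
  ![![0,0,1,0,0,0,0,0], ![0,0,1,0,0,0,1,1], ![1,0,1,0,1,1,1,1], ![0,0,0,0,0,1,0,0]],
  ![![0,1,0,0,0,1,0,1], ![0,0,0,1,0,0,0,1], ![0,1,0,1,0,1,0,1], ![1,1,1,1,1,1,1,1]]]

theorem univ_fin3_fin2 : (Finset.univ : Finset (Fin 3 → Fin 2)) =
    {![0,0,0], ![0,0,1], ![0,1,0], ![0,1,1], ![1,0,0], ![1,0,1], ![1,1,0], ![1,1,1]} := by
  decide

theorem repAt_cofVec (i j : Fin 4) : repAt j (cofVec i j) = cof (Cmat Aconc) i j := by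
  -- `reduce_mod_char!` only finds characteristics recorded in the local context
  have : CharP (MvPolynomial (Fin 4) (ZMod 2)) 2 := inferInstance
  fin_cases i <;> fin_cases j <;>
    simp +decide [repAt, univ_fin3_fin2, cof, det_fin_three, Cmat, Aconc, cofVec, toFin8,
      Fin.prod_univ_three, Fin.succAbove] <;>
    ring_nf <;> reduce_mod_char!

theorem embedV_cofVec_vecMul_blockB (i j : Fin 4) :
    embedV j (cofVec i j) ᵥ* blockB Aconc = ∑ k, Aconc j k • embedV k (cofVec i k) := by
  rw [vecMul_blockB, vertexList_eq]
  funext f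
  revert i j f
  decide +kernel

/-- Over `F₂`, squaring is the identity, so the generic cofactor
eigenrelation specializes to `e_i^{(j)} · b_{jk} = a_{jk} · e_i^{(k)}` for the
concrete matrix `A`; hence `B` acts on each of the four 4-dimensional spans
`span{e_i^{(1)},…,e_i^{(4)}}` as `A` itself. -/
theorem cofactor_eigenrelation_F2 :
    ∀ e : Fin 4 → Fin 4 → Fin 8 → ZMod 2,
      (∀ i j, repAt j (e i j) = cof (Cmat Aconc) i j) →
      (∀ i j k : Fin 4, ∀ t : Fin 3 → Fin 2,
        (∑ s : Fin 3 → Fin 2, e i j (toFin8 s) * thick Aconc j k s t) =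
          Aconc j k * e i k (toFin8 t)) ∧
      (∀ i j : Fin 4,
        embedV j (e i j) ᵥ* blockB Aconc =
          ∑ k : Fin 4, Aconc j k • embedV k (e i k)) := by
  intro e he
  obtain rfl : e = cofVec :=
    funext₂ fun i j => repAt_injective j ((he i j).trans (repAt_cofVec i j).symm)
  refine ⟨fun i j k t => ?_, embedV_cofVec_vecMul_blockB⟩
  simpa only [thick, vecMul_embedV_apply, sum_smul_embedV_apply] using
    congrFun (embedV_cofVec_vecMul_blockB i j) (k, t)
end
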